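/- (Proposition 2, second claim) Let T be a probability tree with d_0 = Σ_i(κ_i−1), and for η ∈ ℝ^{d_0} set ξ_{ij} = exp(η_{ij}) for j < κ_i and ξ_{iκ_i} = 1, and P_{ij}(η) = Σ_r ∏_{a,b} ξ_{ab}^{α_{ab}(r)} over v_{ij}-to-leaf paths r. Let v_i, v_s be inner vertices with κ_i = κ_s = κ and fix j ∈ {1,…,κ}. Then the following are equivalent: (i) the function ℝ^{d_0} → ℝ, η ↦ log P_{ij}(η) + log P_{sκ}(η) − log P_{sj}(η) − log P_{iκ}(η), is an affine-linear function of η; (ii) P_{ij}(η) P_{sκ}(η) = P_{sj}(η) P_{iκ}(η) for all η ∈ ℝ^{d_0}; (iii) N_{ij}(θ) N_{sκ}(θ) = N_{sj}(θ) N_{iκ}(θ) for all θ ∈ Θ_T. -/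

import Mathlib

namespace StagedTrees

/-- A finite directed rooted tree in which every inner vertex has at least two children. -/
inductive Tree : Type where
  | leaf : Tree
  | node : (κ : ℕ) → 2 ≤ κ → (Fin κ → Tree) → Tree

/-- Reindex a label function `θ` to the subtree rooted at the vertex with address `v`. -/
def shift (θ : List ℕ → ℕ → ℝ) (v : List ℕ) : List ℕ → ℕ → ℝ :=
  fun w j => θ (v ++ w) j

/-- The number of outgoing edges of the vertex with address `v` (`0` for leaves and
invalid addresses). -/
def degree : Tree → List ℕ → ℕ
  | .leaf, _ => 0
  | .node κ _ _, [] => κ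
  | .node κ _ c, a :: v => if h : a < κ then degree (c ⟨a, h⟩) v else 0

/-- The subtree rooted at the vertex with address `v`. -/
def subtreeAt : Tree → List ℕ → Tree
  | t, [] => t
  | .leaf, _ :: _ => .leaf
  | .node κ _ c, a :: v => if h : a < κ then subtreeAt (c ⟨a, h⟩) v else .leaf

/-- `v` is the address of a vertex of the tree. -/
def isValid : Tree → List ℕ → Prop
  | _, [] => True
  | .leaf, _ :: _ => False
  | .node κ _ c, a :: v => ∃ h : a < κ, isValid (c ⟨a, h⟩) v

/-- The list of all root-to-leaf paths of the tree, encoded as lists of edge indices. -/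
def leaves : Tree → List (List ℕ)
  | .leaf => [[]]
  | .node κ _ c => (List.finRange κ).flatMap fun a => (leaves (c a)).map (a.val :: ·)

/-- The atomic probability of a root-to-leaf path: the product of the labels of the
edges along the path. -/
def prob (θ : List ℕ → ℕ → ℝ) : Tree → List ℕ → ℝ
  | .leaf, [] => 1
  | .leaf, _ :: _ => 0
  | .node _ _ _, [] => 0
  | .node κ _ c, a :: x =>
      if h : a < κ then θ [] a * prob (shift θ [a]) (c ⟨a, h⟩) x else 0

/-- `θ` is an admissible labelling: at every inner vertex all labels lie in `(0,1)` and
sum to one. -/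
def Admissible (θ : List ℕ → ℕ → ℝ) : Tree → Prop
  | .leaf => True
  | .node κ _ c =>
      (∀ j : Fin κ, θ [] (j : ℕ) ∈ Set.Ioo (0 : ℝ) 1) ∧
      (∑ j : Fin κ, θ [] (j : ℕ)) = 1 ∧
      ∀ a : Fin κ, Admissible (shift θ [(a : ℕ)]) (c a)

/-- The product of the labels along the all-downward path from the root of the tree to a
leaf, where the downward edge of a vertex with `κ` outgoing edges is the edge with
index `κ - 1`. -/
def N (θ : List ℕ → ℕ → ℝ) : Tree → ℝ
  | .leaf => 1
  | .node κ h c => θ [] (κ - 1) * N (shift θ [κ - 1]) (c ⟨κ - 1, by omega⟩)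

/-- `N` of the vertex with address `v`. -/
def Nvert (θ : List ℕ → ℕ → ℝ) (T : Tree) (v : List ℕ) : ℝ :=
  N (shift θ v) (subtreeAt T v)


/-- The free coordinates of a probability tree: pairs `(v, j)` where `v` is the address
of an inner vertex with `κ_v` outgoing edges and `j < κ_v - 1`. -/
abbrev FreeCoord (T : Tree) : Type :=
  {q : List ℕ × ℕ // q.2 + 1 < degree T q.1}

/-- The sum, over all root-to-leaf paths `r` of a tree, of the product of the values of
`f` along `r`. -/
noncomputable def pathSum (f : List ℕ → ℕ → ℝ) : Tree → ℝ
  | .leaf => 1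
  | .node κ _ c => ∑ a : Fin κ, f [] (a : ℕ) * pathSum (shift f [(a : ℕ)]) (c a)

/-- For a point `η ∈ ℝ^{d₀}` of the natural parameter space, the labels
`ξ_{ij} = exp(η_{ij})` for `j < κ_i - 1` and `ξ_{iκ_i} = 1` on the downward edge. -/
noncomputable def xiOfEta (T : Tree) {d₀ : ℕ} (e₀ : Fin d₀ ≃ FreeCoord T)
    (y : Fin d₀ → ℝ) : List ℕ → ℕ → ℝ := fun v j =>
  if h : j + 1 < degree T v then Real.exp (y (e₀.symm ⟨(v, j), h⟩))
  else if j + 1 = degree T v then 1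
  else 0

/-- `P_{ij}(η) = Σ_r ∏_{a,b} ξ_{ab}^{α_{ab}(r)}`, summed over all `v_{ij}`-to-leaf
paths `r`. -/
noncomputable def POfEta (T : Tree) {d₀ : ℕ} (e₀ : Fin d₀ ≃ FreeCoord T)
    (y : Fin d₀ → ℝ) (v : List ℕ) (j : ℕ) : ℝ :=
  pathSum (shift (xiOfEta T e₀ y) (v ++ [j])) (subtreeAt T (v ++ [j]))

/-! ### Auxiliary lemmas -/

lemma shift_nil (θ : List ℕ → ℕ → ℝ) : shift θ [] = θ := rfl

lemma shift_append (θ : List ℕ → ℕ → ℝ) (v w : List ℕ) :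
    shift θ (v ++ w) = shift (shift θ v) w := by
  funext x j; simp [shift, List.append_assoc]

lemma shift_apply_nil (θ : List ℕ → ℕ → ℝ) (v : List ℕ) (j : ℕ) :
    shift θ v [] j = θ v j := by simp [shift]

lemma subtreeAt_leaf (v : List ℕ) : subtreeAt .leaf v = .leaf := by
  cases v <;> rfl

lemma subtreeAt_nil (t : Tree) : subtreeAt t [] = t := by
  cases t <;> rfl

lemma subtreeAt_append (t : Tree) (v w : List ℕ) :
    subtreeAt t (v ++ w) = subtreeAt (subtreeAt t v) w := by
  induction v generalizing t with
  | nil => simp [subtreeAt_nil]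
  | cons a v ih =>
    cases t with
    | leaf => simp [subtreeAt, subtreeAt_leaf]
    | node κ h c =>
      simp only [List.cons_append, subtreeAt]
      split
      · exact ih _
      · simp [subtreeAt_leaf]

lemma degree_leaf (v : List ℕ) (j : ℕ) : degree .leaf v = 0 := rfl

lemma degree_subtreeAt (t : Tree) (v w : List ℕ) :
    degree (subtreeAt t v) w = degree t (v ++ w) := by
  induction v generalizing t with
  | nil => simp [subtreeAt_nil]
  | cons a v ih =>
    cases t with
    | leaf => simp [subtreeAt_leaf, degree]
    | node κ h c =>
      simp only [List.cons_append, subtreeAt, degree]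
      split
      · exact ih _
      · simp [subtreeAt_leaf, degree]

lemma subtreeAt_child (T : Tree) (v : List ℕ) {κ : ℕ} {h2 : 2 ≤ κ} {c : Fin κ → Tree}
    (hs : subtreeAt T v = .node κ h2 c) (a : Fin κ) :
    subtreeAt T (v ++ [(a : ℕ)]) = c a := by
  rw [subtreeAt_append, hs]
  simp [subtreeAt, a.isLt]

lemma degree_of_subtree_node (T : Tree) (v : List ℕ) {κ : ℕ} {h2 : 2 ≤ κ}
    {c : Fin κ → Tree} (hs : subtreeAt T v = .node κ h2 c) :
    degree T v = κ := by
  have := degree_subtreeAt T v []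
  rw [hs, List.append_nil] at this
  exact this.symm

lemma xi_pos (T : Tree) {d₀ : ℕ} (e₀ : Fin d₀ ≃ FreeCoord T) (y : Fin d₀ → ℝ)
    (v : List ℕ) (b : ℕ) (hb : b < degree T v) : 0 < xiOfEta T e₀ y v b := by
  unfold xiOfEta
  split
  · exact Real.exp_pos _
  · rw [if_pos (by omega)]; exact one_pos

lemma xi_last (T : Tree) {d₀ : ℕ} (e₀ : Fin d₀ ≃ FreeCoord T) (y : Fin d₀ → ℝ)
    (v : List ℕ) (b : ℕ) (hb : b + 1 = degree T v) : xiOfEta T e₀ y v b = 1 := by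
  unfold xiOfEta
  rw [dif_neg (by omega), if_pos hb]

/-- The path sum of the subtree at `v`. -/
noncomputable def Q (T : Tree) {d₀ : ℕ} (e₀ : Fin d₀ ≃ FreeCoord T)
    (y : Fin d₀ → ℝ) (v : List ℕ) : ℝ :=
  pathSum (shift (xiOfEta T e₀ y) v) (subtreeAt T v)

lemma POfEta_eq_Q (T : Tree) {d₀ : ℕ} (e₀ : Fin d₀ ≃ FreeCoord T)
    (y : Fin d₀ → ℝ) (v : List ℕ) (j : ℕ) :
    POfEta T e₀ y v j = Q T e₀ y (v ++ [j]) := rfl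

lemma Q_leaf (T : Tree) {d₀ : ℕ} (e₀ : Fin d₀ ≃ FreeCoord T) (y : Fin d₀ → ℝ)
    (v : List ℕ) (hs : subtreeAt T v = .leaf) : Q T e₀ y v = 1 := by
  unfold Q; rw [hs]; rfl

lemma Q_node (T : Tree) {d₀ : ℕ} (e₀ : Fin d₀ ≃ FreeCoord T) (y : Fin d₀ → ℝ)
    (v : List ℕ) {κ : ℕ} {h2 : 2 ≤ κ} {c : Fin κ → Tree}
    (hs : subtreeAt T v = .node κ h2 c) :
    Q T e₀ y v = ∑ a : Fin κ, xiOfEta T e₀ y v (a : ℕ) * Q T e₀ y (v ++ [(a : ℕ)]) := by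
  unfold Q
  rw [hs]
  show (∑ a : Fin κ, shift (xiOfEta T e₀ y) v [] (a : ℕ) *
      pathSum (shift (shift (xiOfEta T e₀ y) v) [(a : ℕ)]) (c a)) = _
  refine Finset.sum_congr rfl fun a _ => ?_
  rw [shift_apply_nil, ← shift_append, subtreeAt_child T v hs a]

lemma Q_pos (T : Tree) {d₀ : ℕ} (e₀ : Fin d₀ ≃ FreeCoord T) (y : Fin d₀ → ℝ) :
    ∀ (s : Tree) (v : List ℕ), s = subtreeAt T v → 0 < Q T e₀ y v := by
  intro s
  induction s with
  | leaf => intro v hv; rw [Q_leaf T e₀ y v hv.symm]; exact one_pos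
  | node κ h2 c ih =>
    intro v hv
    rw [Q_node T e₀ y v hv.symm]
    have hdeg : degree T v = κ := degree_of_subtree_node T v hv.symm
    refine Finset.sum_pos (fun a _ => mul_pos ?_ ?_) ⟨⟨0, by omega⟩, Finset.mem_univ _⟩
    · exact xi_pos T e₀ y v a (by rw [hdeg]; exact a.isLt)
    · exact ih a _ (subtreeAt_child T v hv.symm a).symm

lemma POfEta_pos (T : Tree) {d₀ : ℕ} (e₀ : Fin d₀ ≃ FreeCoord T) (y : Fin d₀ → ℝ)
    (v : List ℕ) (j : ℕ) : 0 < POfEta T e₀ y v j :=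
  Q_pos T e₀ y _ _ rfl

lemma tendsto_Q_one (T : Tree) {d₀ : ℕ} (e₀ : Fin d₀ ≃ FreeCoord T) (z : Fin d₀ → ℝ) :
    ∀ (s : Tree) (v : List ℕ), s = subtreeAt T v →
      Filter.Tendsto (fun t : ℝ => Q T e₀ (fun k => z k - t) v)
        Filter.atTop (nhds 1) := by
  intro s
  induction s with
  | leaf =>
    intro v hv
    simp only [Q_leaf T e₀ _ v hv.symm]
    exact tendsto_const_nhds
  | node κ h2 c ih =>
    intro v hv
    have hdeg : degree T v = κ := degree_of_subtree_node T v hv.symm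
    simp only [Q_node T e₀ _ v hv.symm]
    have key : Filter.Tendsto
        (fun t : ℝ => ∑ a : Fin κ, xiOfEta T e₀ (fun k => z k - t) v (a : ℕ) *
          Q T e₀ (fun k => z k - t) (v ++ [(a : ℕ)])) Filter.atTop
        (nhds (∑ a : Fin κ, if (a : ℕ) + 1 = κ then (1:ℝ) else 0)) := by
      refine tendsto_finset_sum _ fun a _ => ?_
      by_cases hfree : (a : ℕ) + 1 < κ
      · have hxi : ∀ t : ℝ, xiOfEta T e₀ (fun k => z k - t) v (a : ℕ) =
            Real.exp (z (e₀.symm ⟨(v, (a : ℕ)), by rw [hdeg]; exact hfree⟩) - t) := by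
          intro t
          unfold xiOfEta
          rw [dif_pos (by rw [hdeg]; exact hfree)]
        rw [if_neg (show ¬((a : ℕ) + 1 = κ) by omega)]
        simp only [hxi]
        have h0 : Filter.Tendsto
            (fun t : ℝ => Real.exp (z (e₀.symm ⟨(v, (a : ℕ)), by rw [hdeg]; exact hfree⟩) - t))
            Filter.atTop (nhds 0) := by
          apply Real.tendsto_exp_atBot.comp
          exact Filter.tendsto_atBot_add_const_left _ _ Filter.tendsto_neg_atTop_atBot |>.congr
            (fun t => by ring)
        have := h0.mul (ih a _ (subtreeAt_child T v hv.symm a).symm)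
        simpa using this
      · have hlast : (a : ℕ) + 1 = κ := by have := a.isLt; omega
        have hxi : ∀ t : ℝ, xiOfEta T e₀ (fun k => z k - t) v (a : ℕ) = 1 := fun t =>
          xi_last T e₀ _ v _ (by rw [hdeg]; exact hlast)
        rw [if_pos hlast]
        simp only [hxi, one_mul]
        exact ih a _ (subtreeAt_child T v hv.symm a).symm
    have hsum : (∑ a : Fin κ, if (a : ℕ) + 1 = κ then (1:ℝ) else 0) = 1 := by
      have hcongr : ∀ a : Fin κ, (if (a : ℕ) + 1 = κ then (1:ℝ) else 0) =
          if a = (⟨κ - 1, by omega⟩ : Fin κ) then (1:ℝ) else 0 := by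
        intro a
        by_cases h : (a : ℕ) + 1 = κ
        · rw [if_pos h, if_pos (Fin.ext (show (a : ℕ) = κ - 1 by omega))]
        · rw [if_neg h, if_neg (fun hh => h (by rw [hh]; show κ - 1 + 1 = κ; omega))]
      rw [Finset.sum_congr rfl fun a _ => hcongr a]
      simp
    rwa [hsum] at key

lemma tendsto_POfEta_one (T : Tree) {d₀ : ℕ} (e₀ : Fin d₀ ≃ FreeCoord T)
    (z : Fin d₀ → ℝ) (v : List ℕ) (j : ℕ) :
    Filter.Tendsto (fun t : ℝ => POfEta T e₀ (fun k => z k - t) v j)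
      Filter.atTop (nhds 1) := by
  simp only [POfEta_eq_Q]
  exact tendsto_Q_one T e₀ z _ _ rfl

lemma affine_tendsto_zero {A B : ℝ}
    (h : Filter.Tendsto (fun t : ℝ => A - t * B) Filter.atTop (nhds 0)) :
    A = 0 ∧ B = 0 := by
  have h2 : Filter.Tendsto (fun t : ℝ => A - (t + 1) * B) Filter.atTop (nhds 0) := by
    have hc : Filter.Tendsto (fun t : ℝ => t + 1) Filter.atTop Filter.atTop :=
      Filter.tendsto_atTop_add_const_right _ 1 Filter.tendsto_id
    exact h.comp hc
  have hB : Filter.Tendsto (fun _ : ℝ => B) Filter.atTop (nhds 0) := by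
    have h3 := h.sub h2
    rw [sub_zero] at h3
    refine h3.congr fun t => ?_
    ring
  have hB0 : B = 0 := tendsto_nhds_unique tendsto_const_nhds hB
  subst hB0
  have hA : Filter.Tendsto (fun _ : ℝ => A) Filter.atTop (nhds 0) := by
    refine h.congr fun t => ?_
    ring
  exact ⟨tendsto_nhds_unique tendsto_const_nhds hA, rfl⟩

lemma N_pos : ∀ (s : Tree) (θ : List ℕ → ℕ → ℝ), Admissible θ s → 0 < N θ s := by
  intro s
  induction s with
  | leaf => intro θ _; exact one_pos
  | node κ h2 c ih =>
    intro θ hθ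
    unfold N
    exact mul_pos (hθ.1 ⟨κ - 1, by omega⟩).1 (ih _ _ (hθ.2.2 ⟨κ - 1, by omega⟩))

lemma admissible_shift : ∀ (v : List ℕ) (t : Tree) (θ : List ℕ → ℕ → ℝ),
    Admissible θ t → Admissible (shift θ v) (subtreeAt t v) := by
  intro v
  induction v with
  | nil => intro t θ h; rw [subtreeAt_nil]; exact h
  | cons a v ih =>
    intro t θ h
    cases t with
    | leaf => rw [subtreeAt_leaf]; trivial
    | node κ h2 c =>
      show Admissible (shift θ (a :: v)) (subtreeAt (Tree.node κ h2 c) (a :: v))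
      unfold subtreeAt
      split
      · next hlt =>
        have : shift θ (a :: v) = shift (shift θ [a]) v := by
          rw [← shift_append]; rfl
        rw [this]
        exact ih _ _ (h.2.2 ⟨a, hlt⟩)
      · trivial

/-- The admissible labelling corresponding to a natural parameter `y`. -/
noncomputable def thetaOf (T : Tree) {d₀ : ℕ} (e₀ : Fin d₀ ≃ FreeCoord T)
    (y : Fin d₀ → ℝ) : List ℕ → ℕ → ℝ :=
  fun v b => xiOfEta T e₀ y v b * Q T e₀ y (v ++ [b]) / Q T e₀ y v

lemma thetaOf_sum (T : Tree) {d₀ : ℕ} (e₀ : Fin d₀ ≃ FreeCoord T) (y : Fin d₀ → ℝ)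
    (v : List ℕ) {κ : ℕ} {h2 : 2 ≤ κ} {c : Fin κ → Tree}
    (hs : subtreeAt T v = .node κ h2 c) :
    (∑ a : Fin κ, thetaOf T e₀ y v (a : ℕ)) = 1 := by
  have hQ : 0 < Q T e₀ y v := Q_pos T e₀ y _ _ rfl
  unfold thetaOf
  rw [← Finset.sum_div, ← Q_node T e₀ y v hs, div_self hQ.ne']

lemma thetaOf_mem_Ioo (T : Tree) {d₀ : ℕ} (e₀ : Fin d₀ ≃ FreeCoord T) (y : Fin d₀ → ℝ)
    (v : List ℕ) {κ : ℕ} {h2 : 2 ≤ κ} {c : Fin κ → Tree}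
    (hs : subtreeAt T v = .node κ h2 c) (a : Fin κ) :
    thetaOf T e₀ y v (a : ℕ) ∈ Set.Ioo (0:ℝ) 1 := by
  have hdeg : degree T v = κ := degree_of_subtree_node T v hs
  have hpos : ∀ b : Fin κ, 0 < thetaOf T e₀ y v (b : ℕ) := fun b => by
    unfold thetaOf
    exact div_pos (mul_pos (xi_pos T e₀ y v b (by rw [hdeg]; exact b.isLt))
      (Q_pos T e₀ y _ _ rfl)) (Q_pos T e₀ y _ _ rfl)
  refine ⟨hpos a, ?_⟩
  have hsum := thetaOf_sum T e₀ y v hs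
  obtain ⟨b, hb⟩ : ∃ b : Fin κ, b ≠ a := by
    rcases Nat.lt_or_ge 0 (a : ℕ) with h | h
    · exact ⟨⟨0, by omega⟩, fun hh => by simp [Fin.ext_iff] at hh; omega⟩
    · exact ⟨⟨1, by omega⟩, fun hh => by simp [Fin.ext_iff] at hh; omega⟩
  calc thetaOf T e₀ y v (a : ℕ)
      < ∑ b : Fin κ, thetaOf T e₀ y v (b : ℕ) :=
        Finset.single_lt_sum hb (Finset.mem_univ a) (Finset.mem_univ b) (hpos b)
          (fun k _ _ => (hpos k).le)
    _ = 1 := hsum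

lemma admissible_thetaOf (T : Tree) {d₀ : ℕ} (e₀ : Fin d₀ ≃ FreeCoord T)
    (y : Fin d₀ → ℝ) :
    ∀ (s : Tree) (v : List ℕ), s = subtreeAt T v →
      Admissible (shift (thetaOf T e₀ y) v) s := by
  intro s
  induction s with
  | leaf => intro v _; trivial
  | node κ h2 c ih =>
    intro v hv
    refine ⟨fun a => ?_, ?_, fun a => ?_⟩
    · rw [shift_apply_nil]
      exact thetaOf_mem_Ioo T e₀ y v hv.symm a
    · simp only [shift_apply_nil]
      exact thetaOf_sum T e₀ y v hv.symm
    · rw [← shift_append]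
      exact ih a _ (subtreeAt_child T v hv.symm a).symm

lemma N_thetaOf (T : Tree) {d₀ : ℕ} (e₀ : Fin d₀ ≃ FreeCoord T) (y : Fin d₀ → ℝ) :
    ∀ (s : Tree) (v : List ℕ), s = subtreeAt T v →
      N (shift (thetaOf T e₀ y) v) s = (Q T e₀ y v)⁻¹ := by
  intro s
  induction s with
  | leaf =>
    intro v hv
    rw [Q_leaf T e₀ y v hv.symm]
    simp [N]
  | node κ h2 c ih =>
    intro v hv
    have hdeg : degree T v = κ := degree_of_subtree_node T v hv.symm
    have hlast : (κ - 1 : ℕ) + 1 = degree T v := by rw [hdeg]; omega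
    show shift (thetaOf T e₀ y) v [] (κ - 1) *
      N (shift (shift (thetaOf T e₀ y) v) [κ - 1]) (c ⟨κ - 1, by omega⟩) = _
    have hchild : subtreeAt T (v ++ [κ - 1]) = c ⟨κ - 1, by omega⟩ := by
      have := subtreeAt_child T v hv.symm ⟨κ - 1, by omega⟩
      simpa using this
    rw [shift_apply_nil, ← shift_append, ih _ _ hchild.symm]
    unfold thetaOf
    rw [xi_last T e₀ y v _ hlast, one_mul]
    have hq1 : 0 < Q T e₀ y (v ++ [κ - 1]) := Q_pos T e₀ y _ _ rfl
    have hq2 : 0 < Q T e₀ y v := Q_pos T e₀ y _ _ rfl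
    field_simp

lemma Nvert_thetaOf (T : Tree) {d₀ : ℕ} (e₀ : Fin d₀ ≃ FreeCoord T) (y : Fin d₀ → ℝ)
    (v : List ℕ) (j : ℕ) :
    Nvert (thetaOf T e₀ y) T (v ++ [j]) = (POfEta T e₀ y v j)⁻¹ :=
  N_thetaOf T e₀ y _ _ rfl

/-- The natural parameter corresponding to an admissible labelling `θ`. -/
noncomputable def yOf (T : Tree) {d₀ : ℕ} (e₀ : Fin d₀ ≃ FreeCoord T)
    (θ : List ℕ → ℕ → ℝ) : Fin d₀ → ℝ :=
  fun k => Real.log (θ (e₀ k).1.1 (e₀ k).1.2 *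
    Nvert θ T ((e₀ k).1.1 ++ [(e₀ k).1.2]) / Nvert θ T (e₀ k).1.1)

lemma Nvert_pos (T : Tree) (θ : List ℕ → ℕ → ℝ) (hθ : Admissible θ T) (v : List ℕ) :
    0 < Nvert θ T v :=
  N_pos _ _ (admissible_shift v T θ hθ)

lemma Q_yOf (T : Tree) {d₀ : ℕ} (e₀ : Fin d₀ ≃ FreeCoord T) (θ : List ℕ → ℕ → ℝ)
    (hθ : Admissible θ T) :
    ∀ (s : Tree) (v : List ℕ), s = subtreeAt T v →
      Q T e₀ (yOf T e₀ θ) v = (Nvert θ T v)⁻¹ := by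
  intro s
  induction s with
  | leaf =>
    intro v hv
    rw [Q_leaf T e₀ _ v hv.symm]
    unfold Nvert
    rw [← hv]
    simp [N]
  | node κ h2 c ih =>
    intro v hv
    have hdeg : degree T v = κ := degree_of_subtree_node T v hv.symm
    have hadm : Admissible (shift θ v) (subtreeAt T v) := admissible_shift v T θ hθ
    rw [← hv] at hadm
    have hNv : 0 < Nvert θ T v := Nvert_pos T θ hθ v
    have hNc : ∀ a : Fin κ, 0 < Nvert θ T (v ++ [(a : ℕ)]) := fun a =>
      Nvert_pos T θ hθ _
    have hθpos : ∀ a : Fin κ, 0 < θ v (a : ℕ) := fun a => by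
      have := (hadm.1 a).1
      rwa [shift_apply_nil] at this
    have hNnode : Nvert θ T v = θ v (κ - 1) * Nvert θ T (v ++ [κ - 1]) := by
      unfold Nvert
      rw [← hv]
      show shift θ v [] (κ - 1) *
        N (shift (shift θ v) [κ - 1]) (c ⟨κ - 1, by omega⟩) = _
      rw [shift_apply_nil, ← shift_append]
      congr 1
      have := subtreeAt_child T v hv.symm ⟨κ - 1, by omega⟩
      simp only at this
      rw [this]
    rw [Q_node T e₀ _ v hv.symm]
    have hstep : ∀ a : Fin κ,
        xiOfEta T e₀ (yOf T e₀ θ) v (a : ℕ) * Q T e₀ (yOf T e₀ θ) (v ++ [(a : ℕ)])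
          = θ v (a : ℕ) / Nvert θ T v := by
      intro a
      have hQc : Q T e₀ (yOf T e₀ θ) (v ++ [(a : ℕ)]) = (Nvert θ T (v ++ [(a : ℕ)]))⁻¹ :=
        ih a _ (subtreeAt_child T v hv.symm a).symm
      have hθne : θ v (a : ℕ) ≠ 0 := (hθpos a).ne'
      have hNcne : Nvert θ T (v ++ [(a : ℕ)]) ≠ 0 := (hNc a).ne'
      have hNvne : Nvert θ T v ≠ 0 := hNv.ne'
      by_cases hfree : (a : ℕ) + 1 < κ
      · have hxi : xiOfEta T e₀ (yOf T e₀ θ) v (a : ℕ) =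
            θ v (a : ℕ) * Nvert θ T (v ++ [(a : ℕ)]) / Nvert θ T v := by
          unfold xiOfEta
          rw [dif_pos (show (a : ℕ) + 1 < degree T v by omega)]
          unfold yOf
          rw [Equiv.apply_symm_apply]
          exact Real.exp_log (div_pos (mul_pos (hθpos a) (hNc a)) hNv)
        rw [hxi, hQc]
        field_simp
      · have ha : (a : ℕ) = κ - 1 := by have := a.isLt; omega
        have hxi : xiOfEta T e₀ (yOf T e₀ θ) v (a : ℕ) = 1 :=
          xi_last T e₀ _ v _ (by omega)
        have hNv' : Nvert θ T v = θ v (a : ℕ) * Nvert θ T (v ++ [(a : ℕ)]) := by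
          rw [ha]; exact hNnode
        rw [hxi, hQc, one_mul, hNv']
        field_simp
    rw [Finset.sum_congr rfl fun a _ => hstep a, ← Finset.sum_div]
    have hsum : (∑ a : Fin κ, θ v (a : ℕ)) = 1 := by
      have := hadm.2.1
      simpa only [shift_apply_nil] using this
    rw [hsum, one_div]

/-- Proposition 2, second claim. For inner vertices `v_i`, `v_s`
with the same number `κ` of outgoing edges and an edge `j ≤ κ`, the following are
equivalent: (i) `η ↦ log P_{ij}(η) + log P_{sκ}(η) - log P_{sj}(η) - log P_{iκ}(η)` is
an affine-linear function of `η`; (ii) `P_{ij}(η) P_{sκ}(η) = P_{sj}(η) P_{iκ}(η)` for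
all `η ∈ ℝ^{d₀}`; (iii) `N_{ij}(θ) N_{sκ}(θ) = N_{sj}(θ) N_{iκ}(θ)` for all
`θ ∈ Θ_T`. -/
theorem linearity_criterion (T : Tree) (d₀ : ℕ) (e₀ : Fin d₀ ≃ FreeCoord T)
    (u w : List ℕ) (j : ℕ)
    (hu : isValid T u) (hw : isValid T w)
    (hdeg : degree T u = degree T w) (hpos : 0 < degree T u)
    (hj : j < degree T u) :
    ((∃ (L : (Fin d₀ → ℝ) →ₗ[ℝ] ℝ) (c : ℝ), ∀ y : Fin d₀ → ℝ,
        Real.log (POfEta T e₀ y u j) + Real.log (POfEta T e₀ y w (degree T u - 1)) -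
            Real.log (POfEta T e₀ y w j) - Real.log (POfEta T e₀ y u (degree T u - 1)) =
          L y + c) ↔
      (∀ y : Fin d₀ → ℝ,
        POfEta T e₀ y u j * POfEta T e₀ y w (degree T u - 1) =
          POfEta T e₀ y w j * POfEta T e₀ y u (degree T u - 1))) ∧
    ((∀ y : Fin d₀ → ℝ,
        POfEta T e₀ y u j * POfEta T e₀ y w (degree T u - 1) =
          POfEta T e₀ y w j * POfEta T e₀ y u (degree T u - 1)) ↔
      (∀ θ : List ℕ → ℕ → ℝ, Admissible θ T →
        Nvert θ T (u ++ [j]) * Nvert θ T (w ++ [degree T u - 1]) =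
          Nvert θ T (w ++ [j]) * Nvert θ T (u ++ [degree T u - 1]))) := by
  constructor
  · -- (i) ↔ (ii)
    constructor
    · rintro ⟨L, c, hL⟩ y
      -- first show the affine function is identically zero
      have hall : ∀ z : Fin d₀ → ℝ, L z + c = 0 := by
        intro z
        have h1 := tendsto_POfEta_one T e₀ z u j
        have h2 := tendsto_POfEta_one T e₀ z w (degree T u - 1)
        have h3 := tendsto_POfEta_one T e₀ z w j
        have h4 := tendsto_POfEta_one T e₀ z u (degree T u - 1)
        have hlog : Filter.Tendsto (fun t : ℝ =>
            Real.log (POfEta T e₀ (fun k => z k - t) u j) +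
              Real.log (POfEta T e₀ (fun k => z k - t) w (degree T u - 1)) -
              Real.log (POfEta T e₀ (fun k => z k - t) w j) -
              Real.log (POfEta T e₀ (fun k => z k - t) u (degree T u - 1)))
            Filter.atTop (nhds 0) := by
          have := (((h1.log one_ne_zero).add (h2.log one_ne_zero)).sub
            (h3.log one_ne_zero)).sub (h4.log one_ne_zero)
          simpa [Real.log_one] using this
        have hrw : ∀ t : ℝ, L (fun k => z k - t) = L z - t * L (fun _ => (1:ℝ)) := by
          intro t
          have hfun : (fun k => z k - t) = z - t • (fun _ => (1:ℝ)) := by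
            funext k; simp [smul_eq_mul]
          rw [hfun, map_sub, map_smul, smul_eq_mul]
        have haff : Filter.Tendsto (fun t : ℝ =>
            (L z + c) - t * L (fun _ => (1:ℝ))) Filter.atTop (nhds 0) := by
          refine hlog.congr fun t => ?_
          rw [hL (fun k => z k - t), hrw t]
          ring
        exact (affine_tendsto_zero haff).1
      have hzero : Real.log (POfEta T e₀ y u j) +
          Real.log (POfEta T e₀ y w (degree T u - 1)) -
          Real.log (POfEta T e₀ y w j) -
          Real.log (POfEta T e₀ y u (degree T u - 1)) = 0 := by
        rw [hL y]; exact hall y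
      have p1 := POfEta_pos T e₀ y u j
      have p2 := POfEta_pos T e₀ y w (degree T u - 1)
      have p3 := POfEta_pos T e₀ y w j
      have p4 := POfEta_pos T e₀ y u (degree T u - 1)
      have heq : Real.log (POfEta T e₀ y u j) +
          Real.log (POfEta T e₀ y w (degree T u - 1)) =
          Real.log (POfEta T e₀ y w j) +
          Real.log (POfEta T e₀ y u (degree T u - 1)) := by linarith
      calc POfEta T e₀ y u j * POfEta T e₀ y w (degree T u - 1)
          = Real.exp (Real.log (POfEta T e₀ y u j) +
              Real.log (POfEta T e₀ y w (degree T u - 1))) := by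
            rw [Real.exp_add, Real.exp_log p1, Real.exp_log p2]
        _ = Real.exp (Real.log (POfEta T e₀ y w j) +
              Real.log (POfEta T e₀ y u (degree T u - 1))) := by rw [heq]
        _ = POfEta T e₀ y w j * POfEta T e₀ y u (degree T u - 1) := by
            rw [Real.exp_add, Real.exp_log p3, Real.exp_log p4]
    · intro h
      refine ⟨0, 0, fun y => ?_⟩
      have p1 := POfEta_pos T e₀ y u j
      have p2 := POfEta_pos T e₀ y w (degree T u - 1)
      have p3 := POfEta_pos T e₀ y w j
      have p4 := POfEta_pos T e₀ y u (degree T u - 1)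
      have hlog : Real.log (POfEta T e₀ y u j * POfEta T e₀ y w (degree T u - 1)) =
          Real.log (POfEta T e₀ y w j * POfEta T e₀ y u (degree T u - 1)) := by
        rw [h y]
      rw [Real.log_mul p1.ne' p2.ne', Real.log_mul p3.ne' p4.ne'] at hlog
      simp only [LinearMap.zero_apply, add_zero]
      linarith
  · -- (ii) ↔ (iii)
    constructor
    · intro h θ hθ
      have hy := h (yOf T e₀ θ)
      have q1 : POfEta T e₀ (yOf T e₀ θ) u j = (Nvert θ T (u ++ [j]))⁻¹ :=
        Q_yOf T e₀ θ hθ _ _ rfl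
      have q2 : POfEta T e₀ (yOf T e₀ θ) w (degree T u - 1) =
          (Nvert θ T (w ++ [degree T u - 1]))⁻¹ := Q_yOf T e₀ θ hθ _ _ rfl
      have q3 : POfEta T e₀ (yOf T e₀ θ) w j = (Nvert θ T (w ++ [j]))⁻¹ :=
        Q_yOf T e₀ θ hθ _ _ rfl
      have q4 : POfEta T e₀ (yOf T e₀ θ) u (degree T u - 1) =
          (Nvert θ T (u ++ [degree T u - 1]))⁻¹ := Q_yOf T e₀ θ hθ _ _ rfl
      rw [q1, q2, q3, q4, ← mul_inv, ← mul_inv, inv_inj] at hy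
      exact hy
    · intro h y
      have hθ : Admissible (thetaOf T e₀ y) T := by
        have := admissible_thetaOf T e₀ y T [] (subtreeAt_nil T).symm
        rwa [shift_nil] at this
      have hN := h (thetaOf T e₀ y) hθ
      rw [Nvert_thetaOf, Nvert_thetaOf, Nvert_thetaOf, Nvert_thetaOf,
        ← mul_inv, ← mul_inv, inv_inj] at hN
      exact hN

end StagedTrees
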